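/- arXiv:1105.4636 — 4 statements merged into one kernel-verified Lean document; each statement's English description precedes it below -/
import Mathlib

section
/- Let E be a measurable space, N ≥ 1, and let (T¹,Y¹), …, (Tᴺ,Yᴺ) be independent, identically distributed random pairs with values in (0,∞) × E. Assume that the law of T¹ is atomless and that T¹ is independent of Y¹. Then almost surely there is a unique index K₀ attaining min{T¹, …, Tᴺ}, and for every t ≥ 0 and every measurable set A ⊆ E, P( min_{1≤k≤N} Tᵏ > t and Y^{K₀} ∈ A ) = (P(T¹ > t))ᴺ · P(Y¹ ∈ A). In particular, Y^{K₀} has the same law as Y¹ and is independent of min_{1≤k≤N} Tᵏ. -/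
/-!
Ties between independent times with atomless laws are null, so almost surely the minimum of the
`Tᵏ` is attained at a single index, which must then be `K`. Up to a null set the event
`{min T ∈ S, Y^K ∈ A}` is therefore the disjoint union over `k` of
`{T is strictly minimal at k, with value in S} ∩ {Yᵏ ∈ A}`. The first event is a function of the
whole vector `(Tʲ)ⱼ`, which is independent of `Yᵏ`: `(Tᵏ, Yᵏ)` is independent of the other
times and `Tᵏ` of `Yᵏ`. Summing over `k` gives `P(min T ∈ S) · P(Y¹ ∈ A)` for every Borel `S`,
which contains the factorization, the law of `Y^K` and its independence from `min T` at once.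
-/

open MeasureTheory ProbabilityTheory

section Order

variable {ι α : Type*} [ConditionallyCompleteLinearOrder α] [Finite ι] {f : ι → α}

lemma lt_ciInf_iff_of_finite [Nonempty ι] {a : α} : a < ⨅ i, f i ↔ ∀ i, a < f i := by
  refine ⟨fun h i => h.trans_le (ciInf_le (Finite.bddBelow_range f) i), fun h => ?_⟩
  obtain ⟨k, hk⟩ := exists_eq_ciInf_of_finite (f := f)
  exact hk ▸ h k

lemma Function.Injective.eq_ciInf_iff (hf : f.Injective) (k : ι) :
    f k = ⨅ i, f i ↔ ∀ j, j ≠ k → f k < f j := by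
  have hbdd := Finite.bddBelow_range f
  refine ⟨fun hk j hjk => (hk ▸ ciInf_le hbdd j).lt_of_ne (hf.ne hjk.symm), fun h => ?_⟩
  have : Nonempty ι := ⟨k⟩
  refine le_antisymm (le_ciInf fun j => ?_) (ciInf_le hbdd k)
  rcases eq_or_ne j k with rfl | hjk
  · exact le_rfl
  · exact (h j hjk).le

lemma Function.Injective.existsUnique_eq_ciInf [Nonempty ι] (hf : f.Injective) :
    ∃! k, f k = ⨅ i, f i := by
  obtain ⟨k, hk⟩ := exists_eq_ciInf_of_finite (f := f)
  exact ⟨k, hk, fun j hj => hf (hj.trans hk.symm)⟩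

end Order

def strictArgminSet {ι : Type*} (k : ι) (S : Set ℝ) : Set (ι → ℝ) :=
  {x | x k ∈ S ∧ ∀ j, j ≠ k → x k < x j}

section StrictArgmin

variable {ι : Type*} {S : Set ℝ}

lemma measurableSet_strictArgminSet [Countable ι] (k : ι) (hS : MeasurableSet S) :
    MeasurableSet (strictArgminSet k S) := by
  simp only [strictArgminSet, Set.ofPred_and, Set.ofPred_forall]
  exact (measurable_pi_apply k hS).inter <| .iInter fun j => .iInter fun _ =>
    measurableSet_lt (measurable_pi_apply k) (measurable_pi_apply j)

lemma pairwise_disjoint_strictArgminSet (S : Set ℝ) :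
    Pairwise (Function.onFun Disjoint fun k : ι => strictArgminSet k S) := by
  intro k j hkj
  rw [Function.onFun, Set.disjoint_left]
  rintro x ⟨-, hk⟩ ⟨-, hj⟩
  exact (hk j hkj.symm).asymm (hj k hkj)

lemma Function.Injective.mem_strictArgminSet_iff [Finite ι] {x : ι → ℝ} (hx : x.Injective)
    (k : ι) : x ∈ strictArgminSet k S ↔ x k = ⨅ i, x i ∧ ⨅ i, x i ∈ S := by
  rw [strictArgminSet, Set.mem_ofPred_eq, ← hx.eq_ciInf_iff k]
  constructor
  · rintro ⟨hS, hk⟩; exact ⟨hk, hk ▸ hS⟩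
  · rintro ⟨hk, hS⟩; exact ⟨hk ▸ hS, hk⟩

end StrictArgmin

namespace ProbabilityTheory

section Independence

variable {Ω β γ : Type*} [MeasurableSpace Ω] {P : Measure Ω} [IsProbabilityMeasure P]
  [MeasurableSpace β] [MeasurableSpace γ]

lemma IdentDistrib.indepFun {Ω' : Type*} [MeasurableSpace Ω'] {P' : Measure Ω'}
    [IsProbabilityMeasure P'] {X : Ω → β} {Z : Ω → γ} {X' : Ω' → β} {Z' : Ω' → γ}
    (h : IdentDistrib (fun ω => (X ω, Z ω)) (fun ω => (X' ω, Z' ω)) P P')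
    (h' : IndepFun X' Z' P') : IndepFun X Z P := by
  have hX : IdentDistrib X X' P P' := h.comp measurable_fst
  have hZ : IdentDistrib Z Z' P P' := h.comp measurable_snd
  rw [indepFun_iff_map_prod_eq_prod_map_map hX.aemeasurable_fst hZ.aemeasurable_fst, h.map_eq,
    hX.map_eq, hZ.map_eq]
  exact h'.map_prod_eq_prod_map_map hX.aemeasurable_snd hZ.aemeasurable_snd

lemma IndepFun.indepFun_prodMk_of_indepFun_prodMk {δ : Type*} [MeasurableSpace δ]
    {Z : Ω → β} {X : Ω → γ} {W : Ω → δ}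
    (hZ : Measurable Z) (hX : Measurable X) (hW : Measurable W)
    (hZX : IndepFun Z X P) (hZXW : IndepFun (fun ω => (Z ω, X ω)) W P) :
    IndepFun Z (fun ω => (X ω, W ω)) P := by
  have hXW : IndepFun X W P := hZXW.comp measurable_snd measurable_id
  rw [indepFun_iff_map_prod_eq_prod_map_map hZ.aemeasurable (hX.prodMk hW).aemeasurable,
    hXW.map_prod_eq_prod_map_map hX.aemeasurable hW.aemeasurable, ← Measure.prodAssoc_prod,
    ← hZX.map_prod_eq_prod_map_map hZ.aemeasurable hX.aemeasurable,
    ← hZXW.map_prod_eq_prod_map_map (hZ.prodMk hX).aemeasurable hW.aemeasurable,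
    Measure.map_map MeasurableEquiv.prodAssoc.measurable ((hZ.prodMk hX).prodMk hW)]
  rfl

lemma IndepFun.ae_ne {f g : Ω → ℝ} (hf : Measurable f) (hg : Measurable g)
    (hfg : IndepFun f g P) (hg0 : ∀ x, P {ω | g ω = x} = 0) : ∀ᵐ ω ∂P, f ω ≠ g ω := by
  have hdiag : MeasurableSet {p : ℝ × ℝ | p.1 = p.2} :=
    measurableSet_eq_fun measurable_fst measurable_snd
  have hslice : ∀ x : ℝ, Prod.mk x ⁻¹' {p : ℝ × ℝ | p.1 = p.2} = {x} := by
    intro x; ext y; simp [eq_comm]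
  have hatom : ∀ x : ℝ, P.map g {x} = 0 := fun x => by
    rw [Measure.map_apply hg (measurableSet_singleton x)]; exact hg0 x
  rw [ae_iff]
  simp only [ne_eq, not_not]
  change P ((fun ω => (f ω, g ω)) ⁻¹' {p : ℝ × ℝ | p.1 = p.2}) = 0
  rw [← Measure.map_apply (hf.prodMk hg) hdiag,
    hfg.map_prod_eq_prod_map_map hf.aemeasurable hg.aemeasurable, Measure.prod_apply hdiag]
  simp [hslice, hatom]

lemma iIndepFun.ae_injective {ι : Type*} [Countable ι] {X : ι → Ω → ℝ}
    (hX : ∀ i, Measurable (X i)) (hind : iIndepFun X P)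
    (hatom : ∀ i x, P {ω | X i ω = x} = 0) : ∀ᵐ ω ∂P, (fun i => X i ω).Injective := by
  have hne : ∀ i j, ∀ᵐ ω ∂P, i ≠ j → X i ω ≠ X j ω := by
    intro i j
    rcases eq_or_ne i j with rfl | hij
    · exact Filter.Eventually.of_forall fun _ h => absurd rfl h
    · filter_upwards [(hind.indepFun hij).ae_ne (hX i) (hX j) (hatom j)] with ω h _ using h
  filter_upwards [ae_all_iff.2 fun i => ae_all_iff.2 (hne i)] with ω h i j hij
  by_contra hne'
  exact h i j hne' hij

omit [IsProbabilityMeasure P] in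
lemma iIndepFun.measure_lt_iInf {ι : Type*} [Fintype ι] [Nonempty ι] {X : ι → Ω → ℝ}
    (hind : iIndepFun X P) (t : ℝ) :
    P ((fun ω => ⨅ i, X i ω) ⁻¹' Set.Ioi t) = ∏ i, P (X i ⁻¹' Set.Ioi t) := by
  have : (fun ω => ⨅ i, X i ω) ⁻¹' Set.Ioi t = ⋂ i, X i ⁻¹' Set.Ioi t := by
    ext ω; simp [lt_ciInf_iff_of_finite]
  rw [this, hind.meas_iInter fun i => ⟨Set.Ioi t, measurableSet_Ioi, rfl⟩]

lemma iIndepFun.indepFun_snd_pi_fst {ι : Type*} [Fintype ι] [DecidableEq ι]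
    {X : ι → Ω → β} {Z : ι → Ω → γ} (hX : ∀ i, Measurable (X i)) (hZ : ∀ i, Measurable (Z i))
    (hind : iIndepFun (fun i ω => (X i ω, Z i ω)) P) (k : ι) (hk : IndepFun (X k) (Z k) P) :
    IndepFun (Z k) (fun ω i => X i ω) P := by
  let R : Finset ι := {k}ᶜ
  have hrest : IndepFun (fun ω => (Z k ω, X k ω)) (fun ω (i : R) => X i ω) P := by
    have h := hind.indepFun_finset {k} R disjoint_compl_right fun i => (hX i).prodMk (hZ i)
    exact h.comp (φ := fun v => ((v ⟨k, Finset.mem_singleton_self k⟩).2,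
        (v ⟨k, Finset.mem_singleton_self k⟩).1)) (ψ := fun v i => (v i).1)
      (by fun_prop) (by fun_prop)
  have h := (hk.symm.indepFun_prodMk_of_indepFun_prodMk (hZ k) (hX k)
    (measurable_pi_lambda (fun ω (i : R) => X i ω) fun i => hX i) hrest)
  let glue : β × (R → β) → ι → β :=
    fun p i => if h : i = k then p.1 else p.2 ⟨i, by simp [R, h]⟩
  have hglue : Measurable glue := by
    refine measurable_pi_lambda _ fun i => ?_
    by_cases h : i = k
    · simp only [glue, h, dite_true]; fun_prop
    · simp only [glue, h, dite_false]; fun_prop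
  have hX_eq : (fun ω i => X i ω) = glue ∘ fun ω => (X k ω, fun i : R => X i ω) := by
    funext ω i
    by_cases h : i = k
    · subst h; simp [glue]
    · simp [glue, h]
  rw [hX_eq]
  exact h.comp measurable_id hglue

end Independence

section Argmin

variable {Ω E ι : Type*} [MeasurableSpace Ω] {P : Measure Ω} [MeasurableSpace E]
  [Fintype ι] {T : ι → Ω → ℝ} {Y : ι → Ω → E} {K : Ω → ι} {S : Set ℝ} {A : Set E}

lemma measure_iInf_mem_inter_eq_sum (hT : ∀ i, Measurable (T i)) (hY : ∀ i, Measurable (Y i))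
    (hinj : ∀ᵐ ω ∂P, (fun i => T i ω).Injective) (hK : ∀ᵐ ω ∂P, T (K ω) ω = ⨅ i, T i ω)
    (hS : MeasurableSet S) (hA : MeasurableSet A) :
    P ((fun ω => ⨅ i, T i ω) ⁻¹' S ∩ (fun ω => Y (K ω) ω) ⁻¹' A)
      = ∑ k, P ((fun ω i => T i ω) ⁻¹' strictArgminSet k S ∩ Y k ⁻¹' A) := by
  have hTvec : Measurable fun ω i => T i ω := measurable_pi_lambda _ hT
  have hdecomp : ((fun ω => ⨅ i, T i ω) ⁻¹' S ∩ (fun ω => Y (K ω) ω) ⁻¹' A : Set Ω)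
      =ᵐ[P] ⋃ k, (fun ω i => T i ω) ⁻¹' strictArgminSet k S ∩ Y k ⁻¹' A := by
    rw [Filter.eventuallyEq_set]
    filter_upwards [hinj, hK] with ω hω hKω
    simp only [Set.mem_inter_iff, Set.mem_preimage, Set.mem_iUnion,
      hω.mem_strictArgminSet_iff]
    constructor
    · rintro ⟨hmin, hYA⟩
      exact ⟨K ω, ⟨hKω, hmin⟩, hYA⟩
    · rintro ⟨k, ⟨hk, hmin⟩, hYA⟩
      obtain rfl : k = K ω := hω (hk.trans hKω.symm)
      exact ⟨hmin, hYA⟩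
  rw [measure_congr hdecomp, measure_iUnion, tsum_fintype]
  · exact fun k j hkj => ((pairwise_disjoint_strictArgminSet S hkj).preimage _).mono
      Set.inter_subset_left Set.inter_subset_left
  · exact fun k => (hTvec (measurableSet_strictArgminSet k hS)).inter (hY k hA)

lemma measure_iInf_mem_inter_eq_mul [IsProbabilityMeasure P] (hT : ∀ i, Measurable (T i))
    (hY : ∀ i, Measurable (Y i)) (hind : iIndepFun (fun i ω => (T i ω, Y i ω)) P)
    (hTY : ∀ i, IndepFun (T i) (Y i) P) {Y₀ : Ω → E} (hYlaw : ∀ i, IdentDistrib (Y i) Y₀ P P)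
    (hinj : ∀ᵐ ω ∂P, (fun i => T i ω).Injective) (hK : ∀ᵐ ω ∂P, T (K ω) ω = ⨅ i, T i ω)
    (hS : MeasurableSet S) (hA : MeasurableSet A) :
    P ((fun ω => ⨅ i, T i ω) ⁻¹' S ∩ (fun ω => Y (K ω) ω) ⁻¹' A)
      = P ((fun ω => ⨅ i, T i ω) ⁻¹' S) * P (Y₀ ⁻¹' A) := by
  classical
  have hterm : ∀ k, P ((fun ω i => T i ω) ⁻¹' strictArgminSet k S ∩ Y k ⁻¹' A)
      = P ((fun ω i => T i ω) ⁻¹' strictArgminSet k S) * P (Y₀ ⁻¹' A) := fun k => by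
    rw [(hind.indepFun_snd_pi_fst hT hY k (hTY k)).symm.measure_inter_preimage_eq_mul _ _
      (measurableSet_strictArgminSet k hS) hA, (hYlaw k).measure_mem_eq hA]
  have hmin : P ((fun ω => ⨅ i, T i ω) ⁻¹' S)
      = ∑ k, P ((fun ω i => T i ω) ⁻¹' strictArgminSet k S) := by
    simpa using measure_iInf_mem_inter_eq_sum hT hY hinj hK hS MeasurableSet.univ
  rw [measure_iInf_mem_inter_eq_sum hT hY hinj hK hS hA, hmin, Finset.sum_mul]
  exact Finset.sum_congr rfl fun k _ => hterm k

end Argmin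

end ProbabilityTheory

theorem parallel_step_hitting_point_general {Ω : Type*} [MeasurableSpace Ω] (P : Measure Ω)
    [IsProbabilityMeasure P] {E : Type*} [MeasurableSpace E]
    (N : ℕ) (hN : 0 < N) (T : Fin N → Ω → ℝ) (Y : Fin N → Ω → E)
    (hTmeas : ∀ k, Measurable (T k)) (hYmeas : ∀ k, Measurable (Y k))
    (hindep : iIndepFun (fun k ω => (T k ω, Y k ω)) P)
    (hident : ∀ k, Measure.map (fun ω => (T k ω, Y k ω)) P
      = Measure.map (fun ω => (T ⟨0, hN⟩ ω, Y ⟨0, hN⟩ ω)) P)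
    (hatomless : ∀ x : ℝ, P {ω | T ⟨0, hN⟩ ω = x} = 0)
    (hTYindep : IndepFun (T ⟨0, hN⟩) (Y ⟨0, hN⟩) P) :
    (∀ᵐ ω ∂P, ∃! k, T k ω = ⨅ j, T j ω) ∧
      ∀ K : Ω → Fin N, Measurable K → (∀ᵐ ω ∂P, T (K ω) ω = ⨅ j, T j ω) →
        (∀ t : ℝ, 0 ≤ t → ∀ A : Set E, MeasurableSet A →
            P {ω | t < (⨅ j, T j ω) ∧ Y (K ω) ω ∈ A}
              = (P {ω | t < T ⟨0, hN⟩ ω}) ^ N * P {ω | Y ⟨0, hN⟩ ω ∈ A}) ∧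
          Measure.map (fun ω => Y (K ω) ω) P = Measure.map (Y ⟨0, hN⟩) P ∧
          IndepFun (fun ω => ⨅ j, T j ω) (fun ω => Y (K ω) ω) P := by
  have : Nonempty (Fin N) := ⟨⟨0, hN⟩⟩
  have hpair : ∀ k, IdentDistrib (fun ω => (T k ω, Y k ω))
      (fun ω => (T ⟨0, hN⟩ ω, Y ⟨0, hN⟩ ω)) P P := fun k =>
    ⟨((hTmeas k).prodMk (hYmeas k)).aemeasurable,
      ((hTmeas _).prodMk (hYmeas _)).aemeasurable, hident k⟩
  have hTlaw : ∀ k, IdentDistrib (T k) (T ⟨0, hN⟩) P P := fun k => (hpair k).comp measurable_fst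
  have hYlaw : ∀ k, IdentDistrib (Y k) (Y ⟨0, hN⟩) P P := fun k => (hpair k).comp measurable_snd
  have hatom : ∀ k x, P {ω | T k ω = x} = 0 := fun k x =>
    ((hTlaw k).measure_mem_eq (measurableSet_singleton x)).trans (hatomless x)
  have hTindep : iIndepFun T P := hindep.comp (fun _ => Prod.fst) fun _ => measurable_fst
  have hinj := hTindep.ae_injective hTmeas hatom
  refine ⟨hinj.mono fun ω h => h.existsUnique_eq_ciInf, fun K hK hKmin => ?_⟩
  have hfac {S : Set ℝ} {A : Set E} (hS : MeasurableSet S) (hA : MeasurableSet A) :=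
    measure_iInf_mem_inter_eq_mul hTmeas hYmeas hindep (fun k => (hpair k).indepFun hTYindep)
      hYlaw hinj hKmin hS hA
  have hYK : Measurable fun ω => Y (K ω) ω :=
    (measurable_from_prod_countable_left (f := fun p : Ω × Fin N => Y p.2 p.1) hYmeas).comp
      (measurable_id.prodMk hK)
  have hlaw : P.map (fun ω => Y (K ω) ω) = P.map (Y ⟨0, hN⟩) := Measure.ext fun A hA => by
    rw [Measure.map_apply hYK hA, Measure.map_apply (hYmeas _) hA]
    simpa using hfac MeasurableSet.univ hA
  refine ⟨fun t _ A hA => ?_, hlaw, ?_⟩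
  · have hsurv :
        P ((fun ω => ⨅ j, T j ω) ⁻¹' Set.Ioi t) = P (T ⟨0, hN⟩ ⁻¹' Set.Ioi t) ^ N := by
      rw [hTindep.measure_lt_iInf, Finset.prod_congr rfl fun k _ =>
        (hTlaw k).measure_mem_eq measurableSet_Ioi, Finset.prod_const, Finset.card_fin]
    exact (hfac measurableSet_Ioi hA).trans (congrArg (· * _) hsurv)
  · rw [indepFun_iff_measure_inter_preimage_eq_mul]
    intro S A hS hA
    rw [hfac hS hA, ← Measure.map_apply (hYmeas _) hA, ← hlaw, Measure.map_apply hYK hA]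

/-- Parallel step, second assertion: `(Tᵏ, Yᵏ)` are i.i.d. pairs (exit time, hitting point)
with values in `(0,∞) × E`, the law of `T¹` is atomless and `T¹` is independent of `Y¹`.
Then a.s. there is a unique index attaining `min Tᵏ`, and for any (measurable) selection `K₀`
of the argmin, the joint law factorizes:
`P(min Tᵏ > t, Y^{K₀} ∈ A) = (P(T¹ > t))ᴺ · P(Y¹ ∈ A)`.
In particular `Y^{K₀}` has the same law as `Y¹` and is independent of `min Tᵏ`. -/
theorem parallel_step_hitting_point {Ω : Type*} [MeasurableSpace Ω] (P : Measure Ω)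
    [IsProbabilityMeasure P] {E : Type*} [MeasurableSpace E]
    (N : ℕ) (hN : 0 < N) (T : Fin N → Ω → ℝ) (Y : Fin N → Ω → E)
    (hTmeas : ∀ k, Measurable (T k)) (hYmeas : ∀ k, Measurable (Y k))
    (hTpos : ∀ k ω, 0 < T k ω)
    (hindep : iIndepFun (fun k ω => (T k ω, Y k ω)) P)
    (hident : ∀ k, Measure.map (fun ω => (T k ω, Y k ω)) P
      = Measure.map (fun ω => (T ⟨0, hN⟩ ω, Y ⟨0, hN⟩ ω)) P)
    (hatomless : ∀ x : ℝ, P {ω | T ⟨0, hN⟩ ω = x} = 0)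
    (hTYindep : IndepFun (T ⟨0, hN⟩) (Y ⟨0, hN⟩) P) :
    (∀ᵐ ω ∂P, ∃! k, T k ω = ⨅ j, T j ω) ∧
      ∀ K : Ω → Fin N, Measurable K → (∀ᵐ ω ∂P, T (K ω) ω = ⨅ j, T j ω) →
        (∀ t : ℝ, 0 ≤ t → ∀ A : Set E, MeasurableSet A →
            P {ω | t < (⨅ j, T j ω) ∧ Y (K ω) ω ∈ A}
              = (P {ω | t < T ⟨0, hN⟩ ω}) ^ N * P {ω | Y ⟨0, hN⟩ ω ∈ A}) ∧
          Measure.map (fun ω => Y (K ω) ω) P = Measure.map (Y ⟨0, hN⟩) P ∧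
          IndepFun (fun ω => ⨅ j, T j ω) (fun ω => Y (K ω) ω) P :=
  parallel_step_hitting_point_general P N hN T Y hTmeas hYmeas hindep hident hatomless hTYindep
end

section
/- Let T be a real random variable with P(T > 0) = 1 and P(T < ∞) = 1, and suppose that for every positive integer N, if T¹, …, Tᴺ are independent copies of T then N·min{T¹, …, Tᴺ} has the same law as T. Then there exists λ ∈ (0,∞) such that T is exponentially distributed with rate λ, i.e. P(T > t) = exp(−λ t) for all t ≥ 0. -/
/-!
Write `G t = P(T > t)`. Since `N • min` of `N` independent copies has survival function
`G (t / N) ^ N`, the hypothesis says `G t = G (t / N) ^ N` (`IsMinStable G`). Taking `N`-th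
roots gives `G (m / N) = G 1 ^ (m / N)` on the nonnegative rationals, and monotonicity of `G`
extends this to all `t ≥ 0` by squeezing `t` between `⌊N t⌋ / N` and `⌈N t⌉ / N`. Finally
`0 < G 1` because `T > 0` almost surely, and `G 1 < 1` because `T` is finite, so the rate is
`-log (G 1)`.
-/

open MeasureTheory ProbabilityTheory

/-- `T` is exponentially distributed with rate `r` under `P`:
`P(T > t) = exp (-r t)` for all `t ≥ 0`. -/
def ExpDist {Ω : Type*} [MeasurableSpace Ω] (P : Measure Ω) (T : Ω → ℝ) (r : ℝ) : Prop :=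
  ∀ t : ℝ, 0 ≤ t → P {ω | t < T ω} = ENNReal.ofReal (Real.exp (-r * t))

open Filter Topology Set

def IsMinStable (g : ℝ → ℝ) : Prop :=
  ∀ N : ℕ, 0 < N → ∀ t, g t = g (t / N) ^ N

namespace IsMinStable

variable {g : ℝ → ℝ}

theorem nonneg (hg : IsMinStable g) (t : ℝ) : 0 ≤ g t := by
  rw [hg 2 two_pos t]
  positivity

theorem map_zero (hg : IsMinStable g) (hanti : Antitone g) (h1 : 0 < g 1) : g 0 = 1 := by
  have hsq : g 0 = g 0 ^ 2 := by simpa using hg 2 two_pos 0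
  have hpos : 0 < g 0 := h1.trans_le (hanti zero_le_one)
  nlinarith

theorem map_natCast (hg : IsMinStable g) (hanti : Antitone g) (h1 : 0 < g 1) (m : ℕ) :
    g m = g 1 ^ m := by
  rcases Nat.eq_zero_or_pos m with rfl | hm
  · simpa using hg.map_zero hanti h1
  · rw [hg m hm, div_self (Nat.cast_ne_zero.2 hm.ne')]

theorem map_natCast_div (hg : IsMinStable g) (hanti : Antitone g) (h1 : 0 < g 1) (m : ℕ)
    {N : ℕ} (hN : 0 < N) : g (m / N) = g 1 ^ ((m : ℝ) / N) := by
  refine (pow_left_inj₀ (hg.nonneg _) (by positivity) hN.ne').1 ?_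
  rw [← hg N hN, ← Real.rpow_natCast, ← Real.rpow_mul h1.le,
    div_mul_cancel₀ _ (Nat.cast_ne_zero.2 hN.ne'), Real.rpow_natCast]
  exact hg.map_natCast hanti h1 m

theorem eq_rpow (hg : IsMinStable g) (hanti : Antitone g) (h1 : 0 < g 1) {t : ℝ} (ht : 0 ≤ t) :
    g t = g 1 ^ t := by
  have hlim : ∀ {a : ℕ → ℝ}, Tendsto a atTop (𝓝 t) →
      Tendsto (fun n => g 1 ^ a n) atTop (𝓝 (g 1 ^ t)) := fun ha =>
    (Real.continuousAt_const_rpow h1.ne').tendsto.comp ha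
  have hceil := (tendsto_nat_ceil_mul_div_atTop ht).comp tendsto_natCast_atTop_atTop
  have hfloor := (tendsto_nat_floor_mul_div_atTop ht).comp tendsto_natCast_atTop_atTop
  refine le_antisymm (ge_of_tendsto (hlim hfloor) ?_) (le_of_tendsto (hlim hceil) ?_)
  all_goals
    filter_upwards [eventually_gt_atTop 0] with n hn
    have hn' : (0 : ℝ) < n := Nat.cast_pos.2 hn
    simp only [Function.comp_apply]
    rw [← hg.map_natCast_div hanti h1 _ hn]
    apply hanti
  · rw [div_le_iff₀ hn']
    exact Nat.floor_le (by positivity)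
  · rw [le_div_iff₀ hn']
    exact Nat.le_ceil _

end IsMinStable

theorem preimage_mul_iInf_Ioi (N : ℕ) [NeZero N] (t : ℝ) :
    (fun x : Fin N → ℝ => (N : ℝ) * ⨅ k, x k) ⁻¹' Ioi t = univ.pi fun _ => Ioi (t / N) := by
  ext x
  obtain ⟨k₀, hk₀⟩ := exists_eq_ciInf_of_finite (f := x)
  have hN : (0 : ℝ) < N := Nat.cast_pos.2 (NeZero.pos N)
  simp only [mem_preimage, mem_Ioi, mem_univ_pi, ← div_lt_iff₀' hN]
  exact ⟨fun h k => h.trans_le (ciInf_le (finite_range x).bddBelow k), fun h => hk₀ ▸ h k₀⟩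

theorem map_mul_iInf_pi_Ioi (ν : Measure ℝ) [SigmaFinite ν] (N : ℕ) [NeZero N] (t : ℝ) :
    (Measure.pi fun _ : Fin N => ν).map (fun x => (N : ℝ) * ⨅ k, x k) (Ioi t)
      = ν (Ioi (t / N)) ^ N := by
  have hmeas : Measurable fun x : Fin N → ℝ => (N : ℝ) * ⨅ k, x k :=
    (Measurable.iInf fun k => measurable_pi_apply k).const_mul _
  rw [Measure.map_apply hmeas measurableSet_Ioi, preimage_mul_iInf_Ioi, Measure.pi_pi,
    Finset.prod_const, Finset.card_univ, Fintype.card_fin]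

theorem isMinStable_of_map_pi_eq (μ : Measure ℝ) [IsFiniteMeasure μ]
    (h : ∀ N : ℕ, 0 < N →
      (Measure.pi fun _ : Fin N => μ).map (fun x => (N : ℝ) * ⨅ k, x k) = μ) :
    IsMinStable fun t => μ.real (Ioi t) := by
  intro N hN t
  have : NeZero N := ⟨hN.ne'⟩
  show μ.real (Ioi t) = μ.real (Ioi (t / N)) ^ N
  rw [measureReal_def, measureReal_def, ← ENNReal.toReal_pow, ← map_mul_iInf_pi_Ioi, h N hN]

theorem antitone_measureReal_Ioi (μ : Measure ℝ) [IsFiniteMeasure μ] :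
    Antitone fun t => μ.real (Ioi t) :=
  fun _ _ hst => measureReal_mono (Ioi_subset_Ioi hst)

theorem measureReal_Ioi_one_pos (μ : Measure ℝ) [IsFiniteMeasure μ] (h0 : μ (Ioi 0) ≠ 0)
    (hμ : IsMinStable fun t => μ.real (Ioi t)) : 0 < μ.real (Ioi 1) := by
  refine measureReal_nonneg.lt_of_ne fun h1 => h0 ?_
  have hnull : ∀ n : ℕ, μ (Ioi (1 / ((n : ℝ) + 1))) = 0 := by
    intro n
    have : μ.real (Ioi 1) = μ.real (Ioi (1 / (n + 1 : ℕ))) ^ (n + 1) := hμ (n + 1) n.succ_pos 1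
    rw [← h1, eq_comm, pow_eq_zero_iff n.succ_ne_zero, measureReal_eq_zero_iff] at this
    exact_mod_cast this
  have hunion : Ioi (0 : ℝ) = ⋃ n : ℕ, Ioi (1 / ((n : ℝ) + 1)) := by
    ext x
    simp only [mem_Ioi, mem_iUnion]
    exact ⟨exists_nat_one_div_lt, fun ⟨n, hn⟩ => lt_trans (by positivity) hn⟩
  rw [hunion]
  exact measure_iUnion_null hnull

theorem measureReal_Ioi_one_lt_one (μ : Measure ℝ) [IsProbabilityMeasure μ]
    (hμ : IsMinStable fun t => μ.real (Ioi t)) : μ.real (Ioi 1) < 1 := by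
  refine measureReal_le_one.lt_of_ne fun h1 => ?_
  have hIic : ∀ n : ℕ, μ (Iic (n : ℝ)) = 0 := by
    intro n
    have := hμ.map_natCast (antitone_measureReal_Ioi μ) (by rw [h1]; exact one_pos) n
    rw [h1, one_pow] at this
    rwa [← compl_Ioi, prob_compl_eq_zero_iff measurableSet_Ioi, ← ENNReal.toReal_eq_one_iff]
  have hlim := (tendsto_measure_Iic_atTop μ).comp tendsto_natCast_atTop_atTop
  simp only [Function.comp_def, hIic, measure_univ] at hlim
  exact zero_ne_one (tendsto_nhds_unique tendsto_const_nhds hlim)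

/-- Converse assertion: let `T` be a real random variable with `P(T > 0) = 1`
(it is real-valued, hence a.s. finite).  If for every `N ≥ 1`, `N` times the minimum of
`N` independent copies of `T` (canonically realized on the product space
`Measure.pi (fun _ : Fin N => Measure.map T P)`) has the same law as `T`, then `T` is
exponentially distributed with some rate `lam ∈ (0,∞)`. -/
theorem exponential_of_min_property {Ω : Type*} [MeasurableSpace Ω] (P : Measure Ω)
    [IsProbabilityMeasure P] (T : Ω → ℝ) (hT : Measurable T)
    (hpos : P {ω | 0 < T ω} = 1)
    (hmin : ∀ N : ℕ, 0 < N →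
      Measure.map (fun x : Fin N → ℝ => (N : ℝ) * ⨅ k, x k)
          (Measure.pi fun _ : Fin N => Measure.map T P)
        = Measure.map T P) :
    ∃ lam : ℝ, 0 < lam ∧ ExpDist P T lam := by
  set μ := P.map T
  have : IsProbabilityMeasure μ := Measure.isProbabilityMeasure_map hT.aemeasurable
  have hμ : ∀ t, μ (Ioi t) = P {ω | t < T ω} := fun t => Measure.map_apply hT measurableSet_Ioi
  have hstable := isMinStable_of_map_pi_eq μ hmin
  have h1 := measureReal_Ioi_one_pos μ (by simp [hμ, hpos]) hstable
  refine ⟨-Real.log (μ.real (Ioi 1)),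
    neg_pos.2 (Real.log_neg h1 (measureReal_Ioi_one_lt_one μ hstable)), fun t ht => ?_⟩
  rw [← hμ, ← ofReal_measureReal, hstable.eq_rpow (antitone_measureReal_Ioi μ) h1 ht,
    Real.rpow_def_of_pos h1, neg_neg]
end

section
/- Let λ > 0, let ρ : [0,∞) → (0,∞) be continuous, and set R(t) = ∫₀ᵗ ρ(s) ds; assume R(t) → ∞ as t → ∞. Let τ¹ be exponentially distributed with rate λ and let τ² be a random variable independent of τ¹ with P(τ² > t) = exp(−λ R(t)) for all t ≥ 0, and set τ = min(τ¹, τ²). Then τ + R(τ) is exponentially distributed with rate λ. -/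
open MeasureTheory ProbabilityTheory

/-- Non-constant processor speed `ρ(t) > 0`, `R(t) = ∫₀ᵗ ρ(s) ds → ∞`: if `τ¹` is exponential
with rate `lam` and `τ²` is independent of `τ¹` with `P(τ² > t) = exp (-lam R(t))`, then, with
`τ = min (τ¹, τ²)`, the total physical time `τ + R(τ)` is exponentially distributed with
rate `lam`. -/
theorem total_time_exponential {Ω : Type*} [MeasurableSpace Ω] (P : Measure Ω)
    [IsProbabilityMeasure P] (lam : ℝ) (hlam : 0 < lam)
    (ρ : ℝ → ℝ) (hρpos : ∀ t : ℝ, 0 ≤ t → 0 < ρ t)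
    (hρcont : ContinuousOn ρ (Set.Ici 0))
    (R : ℝ → ℝ) (hR : ∀ t : ℝ, R t = ∫ s in (0:ℝ)..t, ρ s)
    (hRtop : Filter.Tendsto R Filter.atTop Filter.atTop)
    (τ1 τ2 : Ω → ℝ) (h1meas : Measurable τ1) (h2meas : Measurable τ2)
    (hτ1 : ExpDist P τ1 lam)
    (hτ2 : ∀ t : ℝ, 0 ≤ t → P {ω | t < τ2 ω} = ENNReal.ofReal (Real.exp (-lam * R t)))
    (hindep : IndepFun τ1 τ2 P) :
    ExpDist P (fun ω => min (τ1 ω) (τ2 ω) + R (min (τ1 ω) (τ2 ω))) lam := by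
  have hint : ∀ a b : ℝ, 0 ≤ a → a ≤ b → IntervalIntegrable ρ volume a b := by
    intro a b ha hab
    apply ContinuousOn.intervalIntegrable
    apply hρcont.mono
    rw [Set.uIcc_of_le hab]
    exact fun x hx => le_trans ha hx.1
  have hR0 : R 0 = 0 := by rw [hR, intervalIntegral.integral_same]
  have hRmono : ∀ a b : ℝ, 0 ≤ a → a ≤ b → R a ≤ R b := by
    intro a b ha hab
    have h1 := hint 0 a le_rfl ha
    have h2 := hint a b ha hab
    have hsplit : R a + ∫ s in a..b, ρ s = R b := by
      rw [hR, hR]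
      exact intervalIntegral.integral_add_adjacent_intervals h1 h2
    have hnn : 0 ≤ ∫ s in a..b, ρ s :=
      intervalIntegral.integral_nonneg hab
        (fun x hx => (hρpos x (le_trans ha hx.1)).le)
    linarith
  set S : ℝ → ℝ := fun u => u + R u with hSdef
  have hSmono : ∀ a b : ℝ, 0 ≤ a → a < b → S a < S b := fun a b ha hab =>
    add_lt_add_of_lt_of_le hab (hRmono a b ha hab.le)
  intro t ht
  -- find M ≥ 0 with S M ≥ t
  obtain ⟨M, hMt, hM0⟩ :=
    ((hRtop.eventually_ge_atTop t).and (Filter.eventually_ge_atTop (0:ℝ))).exists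
  have hSM : t ≤ S M := by
    have := hRmono 0 M le_rfl hM0
    simp only [hSdef]
    linarith
  -- S continuous on [0, M]
  have hScont : ContinuousOn S (Set.Icc 0 M) := by
    have hRc : ContinuousOn R (Set.Icc 0 M) := by
      have := intervalIntegral.continuousOn_primitive_interval' (hint 0 M le_rfl hM0)
        (Set.left_mem_uIcc (a := (0:ℝ)) (b := M))
      rw [Set.uIcc_of_le hM0] at this
      exact (continuousOn_congr (fun x _ => (hR x))).mpr this
    exact (continuousOn_id).add hRc
  -- IVT: get u ∈ [0, M] with S u = t
  have hIVT := intermediate_value_Icc hM0 hScont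
  have htmem : t ∈ Set.Icc (S 0) (S M) := by
    constructor
    · simp only [hSdef]; rw [hR0]; simpa using ht
    · exact hSM
  obtain ⟨u, hu, hSu⟩ := hIVT htmem
  -- a.e., τ1 > 0 and τ2 > 0
  have hae : ∀ᵐ ω ∂P, 0 < τ1 ω ∧ 0 < τ2 ω := by
    have h1 : P {ω | 0 < τ1 ω} = 1 := by
      rw [hτ1 0 le_rfl]; simp
    have h2 : P {ω | 0 < τ2 ω} = 1 := by
      rw [hτ2 0 le_rfl, hR0]; simp
    have m1 : MeasurableSet {ω | 0 < τ1 ω} := measurableSet_lt measurable_const h1meas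
    have m2 : MeasurableSet {ω | 0 < τ2 ω} := measurableSet_lt measurable_const h2meas
    have a1 : ∀ᵐ ω ∂P, 0 < τ1 ω := by
      rw [ae_iff]
      have : {ω | ¬ 0 < τ1 ω} = {ω | 0 < τ1 ω}ᶜ := rfl
      rw [this, measure_compl m1 (measure_ne_top _ _), h1, measure_univ]
      simp
    have a2 : ∀ᵐ ω ∂P, 0 < τ2 ω := by
      rw [ae_iff]
      have : {ω | ¬ 0 < τ2 ω} = {ω | 0 < τ2 ω}ᶜ := rfl
      rw [this, measure_compl m2 (measure_ne_top _ _), h2, measure_univ]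
      simp
    exact a1.and a2
  -- the two events agree a.e.
  have hcongr : P {ω | t < min (τ1 ω) (τ2 ω) + R (min (τ1 ω) (τ2 ω))}
      = P {ω | u < min (τ1 ω) (τ2 ω)} := by
    apply measure_congr
    filter_upwards [hae] with ω hω
    have hm : 0 < min (τ1 ω) (τ2 ω) := lt_min hω.1 hω.2
    have hiff : t < S (min (τ1 ω) (τ2 ω)) ↔ u < min (τ1 ω) (τ2 ω) := by
      constructor
      · intro h
        by_contra hle
        push_neg at hle
        rcases eq_or_lt_of_le hle with heq | hlt
        · rw [heq] at h; rw [hSu] at h; exact lt_irrefl t h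
        · have := hSmono _ _ hm.le hlt
          rw [hSu] at this; linarith
      · intro h
        have := hSmono u _ hu.1 h
        rw [hSu] at this; exact this
    simp only [Set.mem_setOf_eq, eq_iff_iff]
    exact hiff
  rw [hcongr]
  -- split min and use independence
  have hset : {ω | u < min (τ1 ω) (τ2 ω)} = τ1 ⁻¹' (Set.Ioi u) ∩ τ2 ⁻¹' (Set.Ioi u) := by
    ext ω; simp [lt_min_iff]
  rw [hset, hindep.measure_inter_preimage_eq_mul _ _ measurableSet_Ioi measurableSet_Ioi]
  have e1 : P (τ1 ⁻¹' Set.Ioi u) = ENNReal.ofReal (Real.exp (-lam * u)) := hτ1 u hu.1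
  have e2 : P (τ2 ⁻¹' Set.Ioi u) = ENNReal.ofReal (Real.exp (-lam * R u)) := hτ2 u hu.1
  rw [e1, e2, ← ENNReal.ofReal_mul (Real.exp_nonneg _), ← Real.exp_add]
  congr 1
  have : -lam * u + -lam * R u = -lam * (u + R u) := by ring
  rw [this, show u + R u = t from hSu]
end

section
/- Let λ > 0, let (λ_k)_{k≥1} be a strictly increasing sequence of positive reals, let (c_k)_{k≥1} be reals with Σ_{k≥1} |c_k| < ∞, and suppose exp(−λ t) = Σ_{k≥1} c_k exp(−λ_k t) for all t ≥ 0. Then there exists an index k₀ such that λ = λ_{k₀}, c_{k₀} = 1, and c_k = 0 for every k ≠ k₀. -/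
/-!
Let `m` be the first index with `c m ≠ 0`. Multiplying the series by `exp (lam m * t)` and letting
`t → ∞`, dominated convergence for series kills every later term, so the product tends to `c m`.
For the series `exp (-r * t)` this forces `r = lam m` and `c m = 1`. The series with coefficients
`c - Pi.single m 1` then vanishes identically, so by the same limit none of its coefficients can be
the first nonzero one.
-/

open Filter Real Topology

theorem eq_zero_of_tendsto_exp_mul_atTop {a L : ℝ}
    (h : Tendsto (fun t => exp (a * t)) atTop (𝓝 L)) (hL : L ≠ 0) : a = 0 := by
  rcases lt_trichotomy a 0 with ha | ha | ha
  · exact absurd (tendsto_nhds_unique h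
      (tendsto_exp_atBot.comp (tendsto_id.const_mul_atTop_of_neg ha))) hL
  · exact ha
  · exact absurd h
      (not_tendsto_nhds_of_tendsto_atTop (tendsto_exp_atTop.comp (tendsto_id.const_mul_atTop ha)) L)

section DirichletSeries

variable {lam c : ℕ → ℝ}

theorem summable_mul_exp_neg_mul (hlam : Monotone lam) (hc : Summable c) {t : ℝ} (ht : 0 ≤ t) :
    Summable fun k => c k * exp (-lam k * t) := by
  refine hc.abs.mul_right (exp (-lam 0 * t)) |>.of_norm_bounded fun k => ?_
  rw [norm_mul, norm_eq_abs, norm_eq_abs, abs_exp]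
  gcongr
  exact hlam (Nat.zero_le k)

theorem tendsto_exp_mul_tsum_mul_exp_neg_mul (hlam : StrictMono lam) (hc : Summable c) {m : ℕ}
    (hm : ∀ k < m, c k = 0) :
    Tendsto (fun t => exp (lam m * t) * ∑' k, c k * exp (-lam k * t)) atTop (𝓝 (c m)) := by
  have hshift (t : ℝ) : exp (lam m * t) * ∑' k, c k * exp (-lam k * t)
      = ∑' k, c k * exp ((lam m - lam k) * t) := by
    rw [← tsum_mul_left]
    congr with k
    rw [mul_left_comm, ← exp_add]
    ring_nf
  simp_rw [hshift]
  rw [← tsum_ite_eq m c]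
  refine tendsto_tsum_of_dominated_convergence hc.abs (fun k => ?_) ?_
  · rcases lt_trichotomy k m with hk | rfl | hk
    · simp [hm k hk, hk.ne]
    · simp
    · simpa [hk.ne'] using (tendsto_exp_atBot.comp
        (tendsto_id.const_mul_atTop_of_neg (sub_neg.2 (hlam hk)))).const_mul (c k)
  · filter_upwards [eventually_ge_atTop 0] with t ht k
    rcases lt_or_ge k m with hk | hk
    · simp [hm k hk]
    rw [norm_mul, norm_eq_abs, norm_eq_abs, abs_exp]
    exact mul_le_of_le_one_right (abs_nonneg _) <| exp_le_one_iff.2 <|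
      mul_nonpos_of_nonpos_of_nonneg (sub_nonpos.2 (hlam.monotone hk)) ht

theorem exists_ne_zero_tendsto_exp_mul_tsum_mul_exp_neg_mul (hlam : StrictMono lam)
    (hc : Summable c) (hne : ∃ k, c k ≠ 0) : ∃ m, c m ≠ 0 ∧
      Tendsto (fun t => exp (lam m * t) * ∑' k, c k * exp (-lam k * t)) atTop (𝓝 (c m)) := by
  classical
  exact ⟨Nat.find hne, Nat.find_spec hne, tendsto_exp_mul_tsum_mul_exp_neg_mul hlam hc
    fun k hk => not_not.1 (Nat.find_min hne hk)⟩

theorem eq_zero_of_tsum_mul_exp_neg_mul_eq_zero (hlam : StrictMono lam) (hc : Summable c)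
    (h : ∀ᶠ t in atTop, ∑' k, c k * exp (-lam k * t) = 0) : c = 0 := by
  by_contra hne
  obtain ⟨m, hm, hlim⟩ := exists_ne_zero_tendsto_exp_mul_tsum_mul_exp_neg_mul hlam hc
    (Function.ne_iff.1 hne)
  refine hm (tendsto_nhds_unique hlim (tendsto_const_nhds.congr' ?_))
  filter_upwards [h] with t ht
  rw [ht, mul_zero]

end DirichletSeries

theorem dirichlet_series_identification_general (r : ℝ)
    (lam : ℕ → ℝ) (hmono : StrictMono lam)
    (c : ℕ → ℝ) (hsum : Summable fun k => |c k|)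
    (h : ∀ t : ℝ, 0 ≤ t → Real.exp (-r * t) = ∑' k, c k * Real.exp (-lam k * t)) :
    ∃ k₀ : ℕ, r = lam k₀ ∧ c k₀ = 1 ∧ ∀ k ≠ k₀, c k = 0 := by
  have hc : Summable c := hsum.of_abs
  have hne : ∃ k, c k ≠ 0 := by
    by_contra! hzero
    simpa [hzero] using h 0 le_rfl
  obtain ⟨m, hm, hlim⟩ := exists_ne_zero_tendsto_exp_mul_tsum_mul_exp_neg_mul hmono hc hne
  have hexp : Tendsto (fun t => exp ((lam m - r) * t)) atTop (𝓝 (c m)) := by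
    refine hlim.congr' ?_
    filter_upwards [eventually_ge_atTop 0] with t ht
    rw [← h t ht, ← exp_add]
    ring_nf
  have hrm : lam m - r = 0 := eq_zero_of_tendsto_exp_mul_atTop hexp hm
  have hcm : c m = 1 := tendsto_nhds_unique hexp (by simp [hrm])
  have hrest : c - Pi.single m 1 = 0 := by
    refine eq_zero_of_tsum_mul_exp_neg_mul_eq_zero hmono
      (hc.sub (hasSum_pi_single m 1).summable) ?_
    filter_upwards [eventually_ge_atTop 0] with t ht
    simp only [Pi.sub_apply, sub_mul]
    rw [(summable_mul_exp_neg_mul hmono.monotone hc ht).tsum_sub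
      (summable_mul_exp_neg_mul hmono.monotone (hasSum_pi_single m 1).summable ht), ← h t ht]
    simp [Pi.single_apply, ite_mul, sub_eq_zero.1 hrm]
  refine ⟨m, (sub_eq_zero.1 hrm).symm, hcm, fun k hk => ?_⟩
  simpa [hk] using congr_fun hrest k

/-- Identification in an absolutely convergent Dirichlet-type series: if `r > 0`, `(lam k)` is
a strictly increasing sequence of positive reals, `Σ |c k| < ∞`, and
`exp (-r t) = Σ c k exp (-lam k t)` for all `t ≥ 0`, then there is an index `k₀` with
`r = lam k₀`, `c k₀ = 1`, and `c k = 0` for every `k ≠ k₀`. -/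
theorem dirichlet_series_identification (r : ℝ) (hr : 0 < r)
    (lam : ℕ → ℝ) (hpos : ∀ k, 0 < lam k) (hmono : StrictMono lam)
    (c : ℕ → ℝ) (hsum : Summable fun k => |c k|)
    (h : ∀ t : ℝ, 0 ≤ t → Real.exp (-r * t) = ∑' k, c k * Real.exp (-lam k * t)) :
    ∃ k₀ : ℕ, r = lam k₀ ∧ c k₀ = 1 ∧ ∀ k ≠ k₀, c k = 0 :=
  dirichlet_series_identification_general r lam hmono c hsum h
end
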